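/- arXiv:0903.4696 — 2 statements merged into one kernel-verified Lean document; each statement's English description precedes it below -/
import Mathlib

section
/- Let r, ε > 0 and κ = 2√(2rε+ε²). Let l₁ = {(t, 0, 0) : t ∈ ℝ} and l₂ = {(t, λ, 0) : t ∈ ℝ} be parallel lines in ℝ³ with λ > κ. If p ∈ ℝ³ is equidistant from l₁ and l₂ and has nonnegative third coordinate, then the point p + (0,0,r) has distance strictly greater than r + ε from l₁ (and from l₂). -/
/-! Equidistance from the two lines forces `p 1 = λ / 2`, so the squared distance from `p'` to
either line is `(λ / 2) ^ 2 + (p 2 + r) ^ 2 > κ ^ 2 / 4 + r ^ 2 ≥ (r + ε) ^ 2`. -/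

open Metric Set

def xLine (a b : ℝ) : Set (EuclideanSpace ℝ (Fin 3)) := {q | q 1 = a ∧ q 2 = b}

lemma infDist_xLine (a b : ℝ) (p : EuclideanSpace ℝ (Fin 3)) :
    infDist p (xLine a b) = √((p 1 - a) ^ 2 + (p 2 - b) ^ 2) := by
  have dist_eq : ∀ q ∈ xLine a b,
      dist p q = √((p 0 - q 0) ^ 2 + (p 1 - a) ^ 2 + (p 2 - b) ^ 2) := by
    rintro q ⟨hq₁, hq₂⟩
    simp only [EuclideanSpace.dist_eq, Fin.sum_univ_three, Real.dist_eq, sq_abs, hq₁, hq₂]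
  have foot_mem : !₂[p 0, a, b] ∈ xLine a b := ⟨rfl, rfl⟩
  refine le_antisymm ?_ ((le_infDist ⟨_, foot_mem⟩).2 fun q hq => ?_)
  · calc infDist p (xLine a b) ≤ dist p !₂[p 0, a, b] := infDist_le_dist_of_mem foot_mem
      _ = _ := by rw [dist_eq _ foot_mem]; simp
  · rw [dist_eq q hq, add_assoc]
    exact Real.sqrt_le_sqrt (le_add_of_nonneg_left (sq_nonneg _))

lemma coord_eq_half_of_infDist_xLine_eq {lam : ℝ} (hlam : lam ≠ 0) {p : EuclideanSpace ℝ (Fin 3)}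
    (h : infDist p (xLine 0 0) = infDist p (xLine lam 0)) : p 1 = lam / 2 := by
  rw [infDist_xLine, infDist_xLine, Real.sqrt_inj (by positivity) (by positivity)] at h
  have h_prod : lam * (lam - 2 * p 1) = 0 := by linarith
  linarith [(mul_eq_zero.1 h_prod).resolve_left hlam]

lemma add_lt_sqrt_of_two_sqrt_lt {r ε z lam : ℝ} (hr : 0 ≤ r) (hz : 0 ≤ z)
    (hlam : 2 * √(2 * r * ε + ε ^ 2) < lam) : r + ε < √((lam / 2) ^ 2 + (z + r) ^ 2) := by
  have h_sq_sqrt : 2 * r * ε + ε ^ 2 ≤ √(2 * r * ε + ε ^ 2) ^ 2 := by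
    rw [Real.sq_sqrt']; exact le_max_left _ _
  have h_sq_lt : (2 * √(2 * r * ε + ε ^ 2)) ^ 2 < lam ^ 2 :=
    pow_lt_pow_left₀ hlam (by positivity) two_ne_zero
  calc r + ε ≤ √((r + ε) ^ 2) := by rw [Real.sqrt_sq_eq_abs]; exact le_abs_self _
    _ < √((lam / 2) ^ 2 + (z + r) ^ 2) :=
      Real.sqrt_lt_sqrt (sq_nonneg _) (by nlinarith [mul_nonneg hz hr])

theorem cannot_pass_between_corridors_general (r ε κ lam : ℝ) (hr : 0 < r)
    (hκ : κ = 2 * Real.sqrt (2 * r * ε + ε ^ 2)) (hlam : κ < lam)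
    (l₁ l₂ : Set (EuclideanSpace ℝ (Fin 3)))
    (hl₁ : l₁ = {q | q 1 = 0 ∧ q 2 = 0})
    (hl₂ : l₂ = {q | q 1 = lam ∧ q 2 = 0})
    (p : EuclideanSpace ℝ (Fin 3))
    (hequi : Metric.infDist p l₁ = Metric.infDist p l₂)
    (hp : 0 ≤ p 2)
    (p' : EuclideanSpace ℝ (Fin 3))
    (hp' : p' = fun i => p i + if i = 2 then r else 0) :
    r + ε < Metric.infDist p' l₁ ∧ r + ε < Metric.infDist p' l₂ := by
  subst hκ hl₁ hl₂
  have hlam_pos : 0 < lam := lt_of_le_of_lt (by positivity) hlam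
  have hmid : p 1 = lam / 2 := coord_eq_half_of_infDist_xLine_eq hlam_pos.ne' hequi
  have hp'₁ : p' 1 = lam / 2 := by rw [hp']; simp [hmid]
  have hp'₂ : p' 2 = p 2 + r := by rw [hp']; simp
  have key := add_lt_sqrt_of_two_sqrt_lt hr.le hp hlam
  change r + ε < infDist p' (xLine 0 0) ∧ r + ε < infDist p' (xLine lam 0)
  rw [infDist_xLine, infDist_xLine, hp'₁, hp'₂]
  constructor <;> convert key using 3 <;> ring

theorem cannot_pass_between_corridors (r ε κ lam : ℝ) (hr : 0 < r) (hε : 0 < ε)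
    (hκ : κ = 2 * Real.sqrt (2 * r * ε + ε ^ 2)) (hlam : κ < lam)
    (l₁ l₂ : Set (EuclideanSpace ℝ (Fin 3)))
    (hl₁ : l₁ = {q | q 1 = 0 ∧ q 2 = 0})
    (hl₂ : l₂ = {q | q 1 = lam ∧ q 2 = 0})
    (p : EuclideanSpace ℝ (Fin 3))
    (hequi : Metric.infDist p l₁ = Metric.infDist p l₂)
    (hp : 0 ≤ p 2)
    (p' : EuclideanSpace ℝ (Fin 3))
    (hp' : p' = fun i => p i + if i = 2 then r else 0) :
    r + ε < Metric.infDist p' l₁ ∧ r + ε < Metric.infDist p' l₂ :=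
  cannot_pass_between_corridors_general r ε κ lam hr hκ hlam l₁ l₂ hl₁ hl₂ p hequi hp p' hp'
end

section
/- Let x, y ∈ ℝⁿ with ‖x − y‖ ≤ κ, where κ = 2√(2rε + ε²) for r, ε > 0. Then the closed r-neighborhood of the segment [x,y] is contained in the union of the closed balls of radius r+ε centered at x and at y: N̄_r([x,y]) ⊆ B̄(x, r+ε) ∪ B̄(y, r+ε). Consequently, if a ball of radius r+ε can occupy either endpoint without touching an obstacle set O, a ball of radius r can move along the straight segment from x to y without touching O. -/
/-!
For `p = a • x + b • y` on the segment, `a ‖w - x‖² + b ‖w - y‖² = ‖w - p‖² + a b ‖x - y‖²`,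
so the nearer endpoint satisfies `min (‖w - x‖², ‖w - y‖²) ≤ ‖w - p‖² + ‖x - y‖² / 4`.
When `p` is the point of the segment nearest to `w` and `w` is within `r` of the segment, the
bound `‖x - y‖ ≤ 2 √(2 r ε + ε²)` makes the right-hand side at most `r² + 2 r ε + ε² = (r + ε)²`.
-/

open Metric Set

lemma isCompact_segment {E : Type*} [NormedAddCommGroup E] [NormedSpace ℝ E] (x y : E) :
    IsCompact (segment ℝ x y) := by
  rw [segment_eq_image_lineMap]
  exact isCompact_Icc.image AffineMap.lineMap_continuous

section InnerProductSpace

variable {E : Type*} [NormedAddCommGroup E] [InnerProductSpace ℝ E]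

lemma smul_norm_sub_sq_add_smul_norm_sub_sq (w x y : E) {a b : ℝ} (hab : a + b = 1) :
    a * ‖w - x‖ ^ 2 + b * ‖w - y‖ ^ 2 = ‖w - (a • x + b • y)‖ ^ 2 + a * b * ‖x - y‖ ^ 2 := by
  have hp : w - (a • x + b • y) = a • (w - x) + b • (w - y) := by
    nth_rewrite 1 [← one_smul ℝ w, ← hab]
    module
  have hxy : x - y = (w - y) - (w - x) := by abel
  rw [hp, hxy]
  generalize w - x = u
  generalize w - y = v
  rw [norm_add_sq_real, norm_sub_sq_real, norm_smul, norm_smul, real_inner_smul_left,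
    real_inner_smul_right, real_inner_comm u, Real.norm_eq_abs, Real.norm_eq_abs, mul_pow,
    mul_pow, sq_abs, sq_abs, show b = 1 - a by linarith]
  ring

lemma min_dist_sq_le_of_mem_segment {w x y p : E} (hp : p ∈ segment ℝ x y) :
    min (dist w x) (dist w y) ^ 2 ≤ dist w p ^ 2 + dist x y ^ 2 / 4 := by
  obtain ⟨a, b, ha, hb, hab, rfl⟩ := hp
  have hmin : min (dist w x) (dist w y) ^ 2 ≤ a * dist w x ^ 2 + b * dist w y ^ 2 := by
    rcases min_cases (dist w x) (dist w y) with ⟨h, hle⟩ | ⟨h, hlt⟩ <;> rw [h]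
    · nlinarith [pow_le_pow_left₀ dist_nonneg hle 2]
    · nlinarith [pow_le_pow_left₀ dist_nonneg hlt.le 2]
  have hab4 : a * b ≤ 1 / 4 := by nlinarith [sq_nonneg (a - b)]
  have hidentity := smul_norm_sub_sq_add_smul_norm_sub_sq w x y hab
  simp only [← dist_eq_norm] at hidentity
  nlinarith [sq_nonneg (dist x y)]

lemma setOf_infDist_segment_le_subset {x y : E} {r R : ℝ} (hR : 0 ≤ R)
    (h : r ^ 2 + dist x y ^ 2 / 4 ≤ R ^ 2) :
    {w | infDist w (segment ℝ x y) ≤ r} ⊆ closedBall x R ∪ closedBall y R := by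
  intro w hw
  obtain ⟨p, hp, hwp⟩ :=
    (isCompact_segment x y).exists_infDist_eq_dist ⟨x, left_mem_segment ℝ x y⟩ w
  have hwp_sq : dist w p ^ 2 ≤ r ^ 2 := pow_le_pow_left₀ dist_nonneg (hwp ▸ hw) 2
  have hmin : min (dist w x) (dist w y) ≤ R :=
    (pow_le_pow_iff_left₀ (le_min dist_nonneg dist_nonneg) hR two_ne_zero).mp
      ((min_dist_sq_le_of_mem_segment hp).trans (by linarith))
  exact min_le_iff.mp hmin

end InnerProductSpace

lemma closedBall_inter_eq_empty_of_mem_segment {E : Type*} [NormedAddCommGroup E]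
    [NormedSpace ℝ E] {x y z : E} {r : ℝ} {A B O : Set E}
    (hAB : {w | infDist w (segment ℝ x y) ≤ r} ⊆ A ∪ B) (hA : A ∩ O = ∅) (hB : B ∩ O = ∅)
    (hz : z ∈ segment ℝ x y) : closedBall z r ∩ O = ∅ := by
  have hball : closedBall z r ⊆ A ∪ B := fun w hw =>
    hAB ((infDist_le_dist_of_mem hz).trans hw)
  rw [eq_empty_iff_forall_notMem]
  rintro w ⟨hw, hwO⟩
  rcases hball hw with hwA | hwB
  · exact hA.subset ⟨hwA, hwO⟩
  · exact hB.subset ⟨hwB, hwO⟩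

theorem segment_neighborhood_in_endpoint_balls (n : ℕ) (r ε κ : ℝ) (hr : 0 < r) (hε : 0 < ε)
    (hκ : κ = 2 * Real.sqrt (2 * r * ε + ε ^ 2))
    (x y : EuclideanSpace ℝ (Fin n)) (hxy : ‖x - y‖ ≤ κ) :
    {w | Metric.infDist w (segment ℝ x y) ≤ r} ⊆
      Metric.closedBall x (r + ε) ∪ Metric.closedBall y (r + ε) ∧
    ∀ O : Set (EuclideanSpace ℝ (Fin n)),
      Metric.closedBall x (r + ε) ∩ O = ∅ →
      Metric.closedBall y (r + ε) ∩ O = ∅ →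
      ∀ z ∈ segment ℝ x y, Metric.closedBall z r ∩ O = ∅ := by
  have hκ_sq : κ ^ 2 = 4 * (2 * r * ε + ε ^ 2) := by
    rw [hκ, mul_pow, Real.sq_sqrt (by positivity)]
    ring
  have hdist_sq : dist x y ^ 2 ≤ κ ^ 2 :=
    pow_le_pow_left₀ dist_nonneg (by rwa [dist_eq_norm]) 2
  have hsubset := setOf_infDist_segment_le_subset (x := x) (y := y) (r := r)
    (by positivity : 0 ≤ r + ε) (by nlinarith)
  exact ⟨hsubset, fun O hx hy z hz =>
    closedBall_inter_eq_empty_of_mem_segment hsubset hx hy hz⟩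
end
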